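/- arXiv:2003.10624 — 2 statements merged into one kernel-verified Lean document; each statement's English description precedes it below -/
import Mathlib

section
/- Let Γ = Cay(V, S) be a cubelike graph on V = 𝔽₂^m with 0 ∉ S, let a, b, c, d ∈ V with a + b ∈ S, c + d ∈ S, b ≠ c, a ≠ d, and let t > 0. Then Γ has PEST from the edge (a,b) to the edge (c,d) at time t if and only if both of the following hold: (1) a + b + c + d = 0; (2) for every x₀ ∈ V with (b+a)·x₀ = 1 and (c+a)·x₀ = 0, and every x ∈ V with (b+a)·x = 1, one has exp(i t (λ_{x₀} − λ_x)) = (−1)^{(c+a)·x}. -/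
/-!
The characters `χₓ(v) = (-1)^(x·v)` of `𝔽₂^m` are common eigenvectors of every Cayley
adjacency matrix, `χₓ` with eigenvalue `λₓ`; hence `H(t) = 2^(-m) ∑ₓ e^(itλₓ) χₓ χₓᵀ`.
Since `χₓ(a) - χₓ(b)` is `2χₓ(a)` when `(a+b)·x = 1` and `0` otherwise, the edge amplitude is
`2^(1-m)` times a sum of the unit numbers `e^(itλₓ) χₓ(a+c)` over the `x` with
`(a+b)·x = (c+d)·x = 1`. There are at most `2^(m-1)` of them, so the amplitude has modulus one
exactly when every `x` with `(a+b)·x = 1` occurs, i.e. `a+b = c+d`, and all the terms are equal,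
which is condition (2).
-/

open Matrix Finset

noncomputable section

/-- The adjacency matrix of the Cayley (cubelike) graph `Cay(G, S)`. -/
def adjMatrix {G : Type*} [AddCommGroup G] [Fintype G] [DecidableEq G]
    (S : Finset G) : Matrix G G ℂ :=
  fun u v => if u + v ∈ S then 1 else 0

/-- The transfer matrix `H(t) = exp(i t A)`. -/
def transferMatrix {G : Type*} [AddCommGroup G] [Fintype G] [DecidableEq G]
    (S : Finset G) (t : ℝ) : Matrix G G ℂ :=
  NormedSpace.exp (Complex.I • ((t : ℂ) • adjMatrix S))

/-- The standard basis vector `e_a` of `ℂ^V`. -/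
def stdBasis {G : Type*} [DecidableEq G] (a : G) : G → ℂ :=
  fun v => if v = a then 1 else 0

/-- Perfect edge state transfer from the edge `(a,b)` to the edge `(c,d)` at time `t`:
`|(1/2)(e_c - e_d)ᵀ H(t)(e_a - e_b)|² = 1`. -/
def hasPEST {G : Type*} [AddCommGroup G] [Fintype G] [DecidableEq G]
    (S : Finset G) (a b c d : G) (t : ℝ) : Prop :=
  ‖(1 / 2 : ℂ) * dotProduct (stdBasis c - stdBasis d)
      (transferMatrix S t *ᵥ (stdBasis a - stdBasis b))‖ ^ 2 = 1

/-- The eigenvalue `λ_x = ∑_{s ∈ S} (-1)^{x·s}` of a cubelike graph. -/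
def lam {m : ℕ} (S : Finset (Fin m → ZMod 2)) (x : Fin m → ZMod 2) : ℤ :=
  ∑ s ∈ S, (-1) ^ (x ⬝ᵥ s).val

lemma ZMod.eq_zero_or_eq_one (p : ZMod 2) : p = 0 ∨ p = 1 := by revert p; decide

lemma add_self_eq_zero_of_zmod_two {ι : Type*} (x : ι → ZMod 2) : x + x = 0 :=
  funext fun _ => CharTwo.add_self_eq_zero _

lemma add_eq_zero_iff_eq_of_zmod_two {ι : Type*} {x y : ι → ZMod 2} : x + y = 0 ↔ x = y := by
  rw [add_eq_zero_iff_eq_neg, neg_eq_of_add_eq_zero_left (add_self_eq_zero_of_zmod_two y)]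

lemma eq_of_norm_sum_eq_card {α : Type*} {T : Finset α} {u : α → ℂ} (hu : ∀ x ∈ T, ‖u x‖ = 1)
    (hsum : ‖∑ x ∈ T, u x‖ = #T) {x y : α} (hx : x ∈ T) (hy : y ∈ T) : u x = u y := by
  set z := ∑ x ∈ T, u x
  have hn : (#T : ℂ) ≠ 0 := by simpa using Finset.nonempty_iff_ne_empty.mp ⟨x, hx⟩
  -- Rotating by `w` makes the sum real and equal to `#T`, so every rotated term, whose real part
  -- is at most `1`, is `1`.
  set w := starRingEnd ℂ z / #T
  have hw : ‖w‖ = 1 := by simp [w, hsum, Finset.ne_empty_of_mem hx]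
  have hre : ∑ y ∈ T, (w * u y).re = ∑ y ∈ T, 1 := by
    have hwz : w * z = #T := by
      rw [div_mul_eq_mul_div, Complex.conj_mul', hsum, Complex.ofReal_natCast, sq,
        mul_div_cancel_right₀ _ hn]
    rw [← Complex.re_sum, ← mul_sum, hwz, Finset.sum_const, nsmul_one, Complex.natCast_re]
  have hone : ∀ y ∈ T, w * u y = 1 := by
    have hle : ∀ y ∈ T, (w * u y).re ≤ 1 := fun y hy =>
      (Complex.re_le_norm _).trans_eq (by rw [norm_mul, hw, hu y hy, one_mul])
    intro y hy
    have h1 := (Finset.sum_eq_sum_iff_of_le hle).mp hre y hy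
    have h2 : ‖w * u y‖ = 1 := by rw [norm_mul, hw, hu y hy, one_mul]
    rw [Complex.eq_coe_norm_of_nonneg (Complex.re_eq_norm.mp (h1.trans h2.symm)), h2,
      Complex.ofReal_one]
  exact mul_left_cancel₀ (left_ne_zero_of_mul_eq_one (hone x hx))
    ((hone x hx).trans (hone y hy).symm)

lemma norm_sum_filter_eq_card_iff {α : Type*} {T : Finset α} {p : α → Prop} [DecidablePred p]
    {u : α → ℂ} (hu : ∀ x ∈ T, ‖u x‖ = 1) :
    ‖∑ x ∈ T with p x, u x‖ = #T ↔ (∀ x ∈ T, p x) ∧ ∀ x ∈ T, ∀ y ∈ T, u x = u y := by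
  refine ⟨fun h => ?_, fun ⟨hp, heq⟩ => ?_⟩
  · have hcard : #T ≤ #{x ∈ T | p x} := by
      have := (h.symm.trans_le (norm_sum_le _ _)).trans_eq
        (sum_congr rfl fun x hx => hu x (mem_filter.mp hx).1)
      rw [sum_const, nsmul_one] at this
      exact_mod_cast this
    have hfilter := eq_of_subset_of_card_le (filter_subset p T) hcard
    rw [filter_eq_self] at hfilter
    rw [filter_true_of_mem hfilter] at h
    exact ⟨hfilter, fun x hx y hy => eq_of_norm_sum_eq_card hu h hx hy⟩
  rw [filter_true_of_mem hp]
  rcases T.eq_empty_or_nonempty with rfl | ⟨x₀, hx₀⟩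
  · simp
  · rw [sum_congr rfl fun x hx => heq x hx x₀ hx₀, sum_const, nsmul_eq_mul, norm_mul,
      Complex.norm_natCast, hu x₀ hx₀, mul_one]

section Walsh

variable {ι : Type*} [Fintype ι]

def walsh (v : ι → ZMod 2) : AddChar (ι → ZMod 2) ℂ where
  toFun x := AddChar.zmodChar 2 (neg_one_sq (R := ℂ)) (v ⬝ᵥ x)
  map_zero_eq_one' := by simp
  map_add_eq_mul' x y := by simp [dotProduct_add, AddChar.map_add_eq_mul]

lemma walsh_apply (v x : ι → ZMod 2) : walsh v x = (-1) ^ (v ⬝ᵥ x).val := rfl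

lemma walsh_comm (v x : ι → ZMod 2) : walsh v x = walsh x v := by
  rw [walsh_apply, walsh_apply, dotProduct_comm]

lemma walsh_add (v w x : ι → ZMod 2) : walsh (v + w) x = walsh v x * walsh w x := by
  rw [walsh_comm, AddChar.map_add_eq_mul, walsh_comm v, walsh_comm w]

lemma walsh_of_dotProduct_eq_zero {v x : ι → ZMod 2} (h : v ⬝ᵥ x = 0) : walsh v x = 1 := by
  simp [walsh_apply, h]

lemma walsh_of_dotProduct_eq_one {v x : ι → ZMod 2} (h : v ⬝ᵥ x = 1) : walsh v x = -1 := by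
  simp [walsh_apply, h, ZMod.val_one]

lemma norm_walsh (v x : ι → ZMod 2) : ‖walsh v x‖ = 1 := by
  rcases ZMod.eq_zero_or_eq_one (v ⬝ᵥ x) with h | h
  · simp [walsh_of_dotProduct_eq_zero h]
  · simp [walsh_of_dotProduct_eq_one h]

lemma one_sub_walsh (v x : ι → ZMod 2) : 1 - walsh v x = if v ⬝ᵥ x = 1 then 2 else 0 := by
  rcases ZMod.eq_zero_or_eq_one (v ⬝ᵥ x) with h | h
  · simp [walsh_of_dotProduct_eq_zero h, h]
  · rw [walsh_of_dotProduct_eq_one h, if_pos h]; norm_num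

lemma walsh_sub_walsh (a b x : ι → ZMod 2) :
    walsh a x - walsh b x = walsh a x * (1 - walsh (b + a) x) := by
  rw [mul_sub, mul_one, ← walsh_add, add_comm b, ← add_assoc, add_self_eq_zero_of_zmod_two,
    zero_add]

lemma walsh_sub_mul_walsh_sub (a b c d x : ι → ZMod 2) :
    (walsh c x - walsh d x) * (walsh a x - walsh b x) =
      if (b + a) ⬝ᵥ x = 1 ∧ (d + c) ⬝ᵥ x = 1 then 4 * walsh (c + a) x else 0 := by
  rw [walsh_sub_walsh c, walsh_sub_walsh a, one_sub_walsh, one_sub_walsh, walsh_add]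
  split_ifs <;> simp_all
  ring

variable [DecidableEq ι]

lemma exists_dotProduct_eq_one {v : ι → ZMod 2} (hv : v ≠ 0) : ∃ x, v ⬝ᵥ x = 1 := by
  obtain ⟨j, hj⟩ := Function.ne_iff.mp hv
  refine ⟨Pi.single j 1, ?_⟩
  rw [dotProduct_single, mul_one]
  exact (ZMod.eq_zero_or_eq_one _).resolve_left hj

lemma exists_dotProduct_eq_one_and_eq_zero {v w : ι → ZMod 2} (hv : v ≠ 0) (hwv : w ≠ v) :
    ∃ x, v ⬝ᵥ x = 1 ∧ w ⬝ᵥ x = 0 := by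
  obtain ⟨e, he⟩ := exists_dotProduct_eq_one hv
  obtain ⟨f, hf⟩ := exists_dotProduct_eq_one (sub_ne_zero.mpr hwv)
  rw [sub_dotProduct] at hf
  rcases ZMod.eq_zero_or_eq_one (w ⬝ᵥ e) with hwe | hwe
  · exact ⟨e, he, hwe⟩
  rcases ZMod.eq_zero_or_eq_one (v ⬝ᵥ f) with hvf | hvf
  · refine ⟨e + f, by simp [dotProduct_add, he, hvf], ?_⟩
    rw [dotProduct_add, hwe, eq_add_of_sub_eq hf, hvf]; decide
  · exact ⟨f, hvf, by rw [eq_add_of_sub_eq hf, hvf]; decide⟩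

lemma forall_dotProduct_eq_one_imp_iff {v w : ι → ZMod 2} (hv : v ≠ 0) :
    (∀ x, v ⬝ᵥ x = 1 → w ⬝ᵥ x = 1) ↔ w = v := by
  refine ⟨fun h => by_contra fun hwv => ?_, fun h => h ▸ fun _ => id⟩
  obtain ⟨x, hx1, hx0⟩ := exists_dotProduct_eq_one_and_eq_zero hv hwv
  simp [h x hx1] at hx0

lemma exp_mul_walsh_const_iff {v w : ι → ZMod 2} (hv : v ≠ 0) (hwv : w ≠ v)
    (f : (ι → ZMod 2) → ℂ) :
    (∀ x, v ⬝ᵥ x = 1 → ∀ y, v ⬝ᵥ y = 1 →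
      Complex.exp (f x) * walsh w x = Complex.exp (f y) * walsh w y) ↔
    ∀ x₀, v ⬝ᵥ x₀ = 1 → w ⬝ᵥ x₀ = 0 → ∀ x, v ⬝ᵥ x = 1 →
      Complex.exp (f x₀ - f x) = walsh w x := by
  simp only [Complex.exp_sub, div_eq_iff (Complex.exp_ne_zero _)]
  refine ⟨fun h x₀ hx₀ hw₀ x hx => ?_, fun h => ?_⟩
  · rw [← mul_one (Complex.exp (f x₀)), ← walsh_of_dotProduct_eq_zero hw₀, h x₀ hx₀ x hx,
      mul_comm]
  · obtain ⟨x₀, hx₀, hw₀⟩ := exists_dotProduct_eq_one_and_eq_zero hv hwv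
    intro x hx y hy
    rw [mul_comm, ← h x₀ hx₀ hw₀ x hx, mul_comm, ← h x₀ hx₀ hw₀ y hy]

lemma walsh_eq_zero_iff {v : ι → ZMod 2} : walsh v = 0 ↔ v = 0 := by
  refine ⟨fun h => by_contra fun hv => ?_, fun h => ?_⟩
  · obtain ⟨x, hx⟩ := exists_dotProduct_eq_one hv
    have := walsh_of_dotProduct_eq_one hx
    rw [h, AddChar.zero_apply] at this
    norm_num at this
  · exact AddChar.eq_zero_iff.mpr fun x => walsh_of_dotProduct_eq_zero (by simp [h])

lemma sum_walsh (v : ι → ZMod 2) :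
    ∑ x, walsh v x = if v = 0 then (Fintype.card (ι → ZMod 2) : ℂ) else 0 := by
  simp only [AddChar.sum_eq_ite, walsh_eq_zero_iff]

lemma two_mul_card_filter_dotProduct_eq_one {v : ι → ZMod 2} (hv : v ≠ 0) :
    2 * #{x | v ⬝ᵥ x = 1} = Fintype.card (ι → ZMod 2) := by
  have h : ∑ x, (1 - walsh v x) = Fintype.card (ι → ZMod 2) := by
    rw [Finset.sum_sub_distrib, sum_walsh, if_neg hv, sub_zero, Finset.sum_const, Finset.card_univ,
      nsmul_one]
  simp only [one_sub_walsh, Finset.sum_ite, Finset.sum_const_zero, add_zero, Finset.sum_const,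
    nsmul_eq_mul] at h
  exact_mod_cast (mul_comm _ _).trans h

def walshMatrix : Matrix (ι → ZMod 2) (ι → ZMod 2) ℂ := Matrix.of fun u x => walsh u x

lemma walshMatrix_mul_walshMatrix :
    walshMatrix * walshMatrix =
      (Fintype.card (ι → ZMod 2) : ℂ) • (1 : Matrix (ι → ZMod 2) _ ℂ) := by
  ext u v
  simp only [walshMatrix, mul_apply, of_apply, walsh_comm _ v, ← walsh_add, sum_walsh,
    add_eq_zero_iff_eq_of_zmod_two, Matrix.smul_apply, one_apply, smul_eq_mul, mul_ite, mul_one,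
    mul_zero]

lemma walshMatrix_mul_inv_card_smul_walshMatrix :
    walshMatrix * ((Fintype.card (ι → ZMod 2) : ℂ)⁻¹ • walshMatrix) =
      (1 : Matrix (ι → ZMod 2) _ ℂ) := by
  rw [Matrix.mul_smul, walshMatrix_mul_walshMatrix, smul_smul, inv_mul_cancel₀ (by simp), one_smul]

lemma walshMatrix_inv :
    (walshMatrix : Matrix (ι → ZMod 2) _ ℂ)⁻¹ = (Fintype.card (ι → ZMod 2) : ℂ)⁻¹ • walshMatrix :=
  inv_eq_right_inv walshMatrix_mul_inv_card_smul_walshMatrix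

lemma isUnit_det_walshMatrix : IsUnit (walshMatrix : Matrix (ι → ZMod 2) _ ℂ).det :=
  isUnit_det_of_right_inverse walshMatrix_mul_inv_card_smul_walshMatrix

end Walsh

lemma stdBasis_eq_piSingle {G : Type*} [DecidableEq G] (a : G) : stdBasis a = Pi.single a 1 :=
  funext fun v => (Pi.single_apply a 1 v).symm

lemma stdBasis_dotProduct_mulVec_stdBasis {G : Type*} [Fintype G] [DecidableEq G]
    (M : Matrix G G ℂ) (u v : G) : stdBasis u ⬝ᵥ (M *ᵥ stdBasis v) = M u v := by
  rw [stdBasis_eq_piSingle, stdBasis_eq_piSingle, mulVec_single_one, single_one_dotProduct,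
    col_apply]

section Spectrum

variable {m : ℕ} (S : Finset (Fin m → ZMod 2))

lemma lam_eq_sum_walsh (x : Fin m → ZMod 2) : (lam S x : ℂ) = ∑ s ∈ S, walsh s x := by
  simp [lam, walsh_apply, dotProduct_comm]

lemma adjMatrix_mul_walshMatrix :
    adjMatrix S * walshMatrix = walshMatrix * diagonal fun x => (lam S x : ℂ) := by
  ext u x
  have hshift : ∑ v, (if u + v ∈ S then (1 : ℂ) else 0) * walsh v x
      = ∑ s, if s ∈ S then walsh (u + s) x else 0 :=
    (Fintype.sum_equiv (Equiv.addLeft u) _ _ fun s => by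
      simp [← add_assoc, add_self_eq_zero_of_zmod_two]).symm
  rw [mul_diagonal, mul_apply]
  simp only [adjMatrix, walshMatrix, of_apply, hshift, sum_ite_mem, univ_inter, walsh_add,
    ← mul_sum, lam_eq_sum_walsh]

lemma adjMatrix_eq_conj :
    adjMatrix S = walshMatrix * diagonal (fun x => (lam S x : ℂ)) * walshMatrix⁻¹ := by
  rw [← adjMatrix_mul_walshMatrix, mul_nonsing_inv_cancel_right _ _ isUnit_det_walshMatrix]

lemma transferMatrix_eq_conj (t : ℝ) :
    transferMatrix S t = walshMatrix *
      diagonal (fun x => Complex.exp (Complex.I * t * lam S x)) * walshMatrix⁻¹ := by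
  have h : Complex.I • ((t : ℂ) • adjMatrix S) =
      walshMatrix * diagonal (fun x => Complex.I * t * lam S x) * walshMatrix⁻¹ := by
    rw [adjMatrix_eq_conj, smul_smul, ← Matrix.smul_mul, ← Matrix.mul_smul, ← diagonal_smul]
    rfl
  rw [transferMatrix, h, exp_conj _ _ ((isUnit_iff_isUnit_det _).mpr isUnit_det_walshMatrix),
    exp_diagonal]
  simp only [Pi.exp_def, Complex.exp_eq_exp_ℂ]

lemma transferMatrix_apply (t : ℝ) (u v : Fin m → ZMod 2) :
    transferMatrix S t u v = (Fintype.card (Fin m → ZMod 2) : ℂ)⁻¹ *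
      ∑ x, Complex.exp (Complex.I * t * lam S x) * (walsh u x * walsh v x) := by
  rw [transferMatrix_eq_conj, walshMatrix_inv, Matrix.mul_smul, Matrix.smul_apply, mul_apply,
    smul_eq_mul]
  congr 1
  refine sum_congr rfl fun x _ => ?_
  simp only [mul_diagonal, walshMatrix, of_apply, walsh_comm x v]
  ring

lemma edgeAmplitude_eq (t : ℝ) (a b c d : Fin m → ZMod 2) :
    (1 / 2 : ℂ) * (stdBasis c - stdBasis d) ⬝ᵥ (transferMatrix S t *ᵥ (stdBasis a - stdBasis b)) =
      2 / Fintype.card (Fin m → ZMod 2) *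
        ∑ x with (b + a) ⬝ᵥ x = 1 ∧ (d + c) ⬝ᵥ x = 1,
          Complex.exp (Complex.I * t * lam S x) * walsh (c + a) x := by
  rw [mulVec_sub, dotProduct_sub, sub_dotProduct, sub_dotProduct]
  repeat rw [stdBasis_dotProduct_mulVec_stdBasis]
  repeat rw [transferMatrix_apply]
  rw [← mul_sub, ← mul_sub, ← mul_sub, ← sum_sub_distrib, ← sum_sub_distrib, ← sum_sub_distrib,
    sum_filter, mul_sum, mul_sum, mul_sum]
  refine sum_congr rfl fun x _ => ?_
  have h := walsh_sub_mul_walsh_sub a b c d x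
  split_ifs at h ⊢ <;>
    linear_combination
      Complex.exp (Complex.I * t * lam S x) / (2 * Fintype.card (Fin m → ZMod 2)) * h

end Spectrum

theorem hasPEST_iff_cubelike_general {m : ℕ}
    (S : Finset (Fin m → ZMod 2)) (h0 : (0 : Fin m → ZMod 2) ∉ S)
    (a b c d : Fin m → ZMod 2) (hab : a + b ∈ S)
    (hbc : b ≠ c) (t : ℝ) :
    hasPEST S a b c d t ↔
      a + b + c + d = 0 ∧
      ∀ x₀ : Fin m → ZMod 2, (b + a) ⬝ᵥ x₀ = 1 → (c + a) ⬝ᵥ x₀ = 0 →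
        ∀ x : Fin m → ZMod 2, (b + a) ⬝ᵥ x = 1 →
          Complex.exp (Complex.I * t * ((lam S x₀ - lam S x : ℤ) : ℂ)) =
            (-1 : ℂ) ^ ((c + a) ⬝ᵥ x).val := by
  have hba : b + a ≠ 0 := fun h => h0 (by rwa [add_comm, h] at hab)
  have hcard := two_mul_card_filter_dotProduct_eq_one hba
  have hscale : ∀ s : ℂ, ‖2 / Fintype.card (Fin m → ZMod 2) * s‖ ^ 2 = 1 ↔
      ‖s‖ = #{x | (b + a) ⬝ᵥ x = 1} := by
    intro s
    have hpos : (#{x | (b + a) ⬝ᵥ x = 1} : ℝ) ≠ 0 := by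
      have := Fintype.card_pos (α := Fin m → ZMod 2)
      exact Nat.cast_ne_zero.mpr (by omega)
    rw [← hcard, Nat.cast_mul, Nat.cast_ofNat, div_mul_cancel_left₀ two_ne_zero, norm_mul, norm_inv,
      Complex.norm_natCast, pow_eq_one_iff_of_nonneg (by positivity) two_ne_zero, inv_mul_eq_div,
      div_eq_one_iff_eq hpos]
  have hunit : ∀ x ∈ ({x | (b + a) ⬝ᵥ x = 1} : Finset _),
      ‖Complex.exp (Complex.I * t * lam S x) * walsh (c + a) x‖ = 1 := fun x _ => by
    rw [norm_mul, norm_walsh, mul_one, Complex.norm_exp]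
    simp
  have hsum : a + b + c + d = 0 ↔ d + c = b + a := by
    rw [show a + b + c + d = (b + a) + (d + c) by abel, add_eq_zero_iff_eq_of_zmod_two, eq_comm]
  rw [hasPEST, edgeAmplitude_eq, hscale, ← filter_filter, norm_sum_filter_eq_card_iff hunit, hsum,
    ← forall_dotProduct_eq_one_imp_iff hba]
  simp only [mem_filter, mem_univ, true_and, Int.cast_sub, mul_sub]
  exact and_congr_right fun _ =>
    exp_mul_walsh_const_iff hba (fun h => hbc (add_right_cancel h).symm) _

/-- Characterization of PEST on cubelike graphs at a given time `t` (Lemma 1). -/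
theorem hasPEST_iff_cubelike {m : ℕ} (hm : 1 ≤ m)
    (S : Finset (Fin m → ZMod 2)) (h0 : (0 : Fin m → ZMod 2) ∉ S)
    (a b c d : Fin m → ZMod 2) (hab : a + b ∈ S) (hcd : c + d ∈ S)
    (hbc : b ≠ c) (had : a ≠ d) (t : ℝ) (ht : 0 < t) :
    hasPEST S a b c d t ↔
      a + b + c + d = 0 ∧
      ∀ x₀ : Fin m → ZMod 2, (b + a) ⬝ᵥ x₀ = 1 → (c + a) ⬝ᵥ x₀ = 0 →
        ∀ x : Fin m → ZMod 2, (b + a) ⬝ᵥ x = 1 →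
          Complex.exp (Complex.I * t * ((lam S x₀ - lam S x : ℤ) : ℂ)) =
            (-1 : ℂ) ^ ((c + a) ⬝ᵥ x).val :=
  hasPEST_iff_cubelike_general S h0 a b c d hab hbc t

end
end

section
/- Let Γ = Cay(V, S) be a cubelike graph on V = 𝔽₂^m with 0 ∉ S, let a, b, c, d ∈ V with a + b ∈ S, c + d ∈ S, b ≠ c, a ≠ d, c ≠ a, and a + b + c + d = 0, and suppose Γ has PEST from the edge (a,b) to the edge (c,d) at some positive time. Fix x₀ ∈ Ω₊ and let M = gcd{λ_{x₀} − λ_x : x ∈ V, (a+b)·x = 1, x ≠ x₀}. Then for every t > 0, Γ has PEST from (a,b) to (c,d) at time t if and only if t = (2u+1)π/M for some non-negative integer u. -/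
open Matrix Finset

noncomputable section

/-!
The characters `v ↦ (-1)^{x·v}` diagonalise `A`, so `H(t)_{uv} = 2^{-m} ∑_x e^{itλ_x} (-1)^{x·(u+v)}`.
Since `d = a + b + c`, the edge amplitude collapses to `2^{1-m} ∑_{(a+b)·x = 1} (-1)^{(c+a)·x} e^{itλ_x}`,
an average of `2^{m-1}` unit complex numbers. It has modulus one iff all of them agree with the term
at `x₀`, i.e. iff `t(λ_{x₀} - λ_x)/π` is an integer of parity `(c+a)·x` for every `x ≠ x₀` with
`(a+b)·x = 1`. By Bézout, `tM/π` is then an integer `N`; an `x` with `(c+a)·x = 1` forces `N` odd,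
and comparing with the given PEST time shows that every odd `N` works.
-/

namespace Cubelike

def chi (u : ZMod 2) : ℂ := (-1) ^ u.val

@[simp] lemma chi_zero : chi 0 = 1 := by simp [chi]

@[simp] lemma chi_one : chi 1 = -1 := by simp [chi, ZMod.val_one]

lemma chi_add (u v : ZMod 2) : chi (u + v) = chi u * chi v := by
  rw [chi, chi, chi, ZMod.val_add, ← neg_one_pow_eq_pow_mod_two, pow_add]

lemma norm_chi (u : ZMod 2) : ‖chi u‖ = 1 := by simp [chi]

lemma chi_eq_exp (ε : ZMod 2) : chi ε = Complex.exp (ε.val * Real.pi * Complex.I) := by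
  rw [chi, mul_assoc, Complex.exp_nat_mul, Complex.exp_pi_mul_I]

lemma exp_mul_pi_mul_I_eq_chi_iff (θ : ℝ) (ε : ZMod 2) :
    Complex.exp (θ * Real.pi * Complex.I) = chi ε ↔ ∃ n : ℤ, θ = n ∧ (n : ZMod 2) = ε := by
  have hπI : (Real.pi : ℂ) * Complex.I ≠ 0 := by simp [Real.pi_ne_zero]
  rw [chi_eq_exp, Complex.exp_eq_exp_iff_exists_int]
  constructor
  · rintro ⟨k, hk⟩
    refine ⟨ε.val + 2 * k, ?_, ?_⟩
    · have : (θ : ℂ) * (Real.pi * Complex.I) =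
          ((ε.val + 2 * k : ℤ) : ℂ) * (Real.pi * Complex.I) := by
        push_cast
        linear_combination hk
      exact_mod_cast mul_right_cancel₀ hπI this
    · push_cast
      rw [ZMod.natCast_zmod_val, show (2 : ZMod 2) = 0 from rfl, zero_mul, add_zero]
  · rintro ⟨n, rfl, rfl⟩
    obtain ⟨k, hk⟩ := (ZMod.intCast_eq_intCast_iff_dvd_sub _ _ _).1
      (by rw [Int.cast_natCast, ZMod.natCast_zmod_val] : (((n : ZMod 2).val : ℤ) : ZMod 2) = n)
    refine ⟨k, ?_⟩
    have : (n : ℂ) = (n : ZMod 2).val + 2 * k := by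
      rw [← sub_eq_iff_eq_add']
      exact_mod_cast hk
    push_cast
    rw [this]
    ring

lemma zmod_two_eq_zero_or_eq_one (u : ZMod 2) : u = 0 ∨ u = 1 := by decide +revert

lemma add_eq_zero_iff_eq {G : Type*} [AddCommGroup G] [Module (ZMod 2) G] {u v : G} :
    u + v = 0 ↔ u = v := by
  rw [← ZModModule.sub_eq_add, sub_eq_zero]

variable {m : ℕ}

lemma cast_lam (S : Finset (Fin m → ZMod 2)) (x : Fin m → ZMod 2) :
    (lam S x : ℂ) = ∑ s ∈ S, chi (x ⬝ᵥ s) := by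
  simp [lam, chi]

lemma exists_dotProduct_eq_one {p : Fin m → ZMod 2} (hp : p ≠ 0) : ∃ z, p ⬝ᵥ z = 1 := by
  obtain ⟨i, hi⟩ := Function.ne_iff.1 hp
  refine ⟨Pi.single i 1, ?_⟩
  rw [dotProduct_single, mul_one]
  exact (zmod_two_eq_zero_or_eq_one _).resolve_left hi

lemma exists_dotProduct_eq_one_of_dotProduct_eq_zero {p q x₀ : Fin m → ZMod 2} (hq : q ≠ 0)
    (hpx₀ : p ⬝ᵥ x₀ = 1) (hqx₀ : q ⬝ᵥ x₀ = 0) : ∃ y, p ⬝ᵥ y = 1 ∧ q ⬝ᵥ y = 1 := by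
  obtain ⟨z, hz⟩ := exists_dotProduct_eq_one hq
  rcases zmod_two_eq_zero_or_eq_one (p ⬝ᵥ z) with hpz | hpz
  · exact ⟨z + x₀, by simp [dotProduct_add, hpz, hpx₀], by simp [dotProduct_add, hz, hqx₀]⟩
  · exact ⟨z, hpz, hz⟩

lemma sum_chi_dotProduct (y : Fin m → ZMod 2) :
    ∑ x : Fin m → ZMod 2, chi (x ⬝ᵥ y) = if y = 0 then 2 ^ m else 0 := by
  split_ifs with hy
  · simp [hy, Fintype.card_pi, ZMod.card]
  · obtain ⟨z, hz⟩ := exists_dotProduct_eq_one hy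
    have hflip := Equiv.sum_comp (Equiv.addRight z) fun x => chi (x ⬝ᵥ y)
    simp only [Equiv.coe_addRight, add_dotProduct, chi_add, dotProduct_comm z, hz, chi_one,
      ← sum_mul] at hflip
    linear_combination -hflip / 2

lemma two_mul_card_filter_dotProduct_eq_one {p : Fin m → ZMod 2} (hp : p ≠ 0) :
    2 * #{x | p ⬝ᵥ x = 1} = 2 ^ m := by
  obtain ⟨z, hz⟩ := exists_dotProduct_eq_one hp
  have hswap : #{x | p ⬝ᵥ x = 1} = #{x | ¬p ⬝ᵥ x = 1} := by
    have hbit : ∀ u : ZMod 2, u + 1 = 1 ↔ ¬u = 1 := by decide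
    refine card_nbij' (· + z) (· + z) ?_ ?_ ?_ ?_ <;> intro x hx <;>
      simp_all [dotProduct_add, add_assoc, ZModModule.add_self]
  have := card_filter_add_card_filter_not (s := univ) (fun x : Fin m → ZMod 2 => p ⬝ᵥ x = 1)
  simp [Fintype.card_pi, ZMod.card] at this
  omega

def hadamard (m : ℕ) : Matrix (Fin m → ZMod 2) (Fin m → ZMod 2) ℂ :=
  of fun x y => chi (x ⬝ᵥ y)

lemma hadamard_mul_diagonal_mul_hadamard_apply (f : (Fin m → ZMod 2) → ℂ)
    (u v : Fin m → ZMod 2) :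
    (hadamard m * diagonal f * hadamard m) u v = ∑ x, f x * chi (x ⬝ᵥ (u + v)) := by
  rw [mul_apply]
  simp only [mul_diagonal, hadamard, of_apply, dotProduct_add, chi_add, dotProduct_comm u]
  exact sum_congr rfl fun x _ => by ring

lemma hadamard_mul_hadamard : hadamard m * hadamard m = (2 ^ m : ℂ) • 1 := by
  ext u v
  have h := hadamard_mul_diagonal_mul_hadamard_apply 1 u v
  rw [diagonal_one', mul_one] at h
  simp only [h, Pi.one_apply, one_mul, sum_chi_dotProduct, add_eq_zero_iff_eq, Matrix.smul_apply,
    one_apply, smul_eq_mul, mul_ite, mul_one, mul_zero]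

lemma hadamard_mul_smul_hadamard : hadamard m * ((2 ^ m : ℂ)⁻¹ • hadamard m) = 1 := by
  rw [Matrix.mul_smul, hadamard_mul_hadamard, smul_smul, inv_mul_cancel₀ (by simp), one_smul]

lemma inv_hadamard : (hadamard m)⁻¹ = (2 ^ m : ℂ)⁻¹ • hadamard m :=
  inv_eq_right_inv hadamard_mul_smul_hadamard

lemma isUnit_hadamard : IsUnit (hadamard m) :=
  (isUnit_iff_isUnit_det _).2 (isUnit_det_of_right_inverse hadamard_mul_smul_hadamard)

lemma hadamard_conj_diagonal_apply (f : (Fin m → ZMod 2) → ℂ) (u v : Fin m → ZMod 2) :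
    (hadamard m * diagonal f * (hadamard m)⁻¹) u v =
      (2 ^ m : ℂ)⁻¹ * ∑ x, f x * chi (x ⬝ᵥ (u + v)) := by
  rw [inv_hadamard, Matrix.mul_smul, Matrix.smul_apply, hadamard_mul_diagonal_mul_hadamard_apply,
    smul_eq_mul]

lemma adjMatrix_eq_hadamard_conj (S : Finset (Fin m → ZMod 2)) :
    adjMatrix S = hadamard m * diagonal (fun x => (lam S x : ℂ)) * (hadamard m)⁻¹ := by
  ext u v
  rw [hadamard_conj_diagonal_apply]
  have hsum : ∑ x, (lam S x : ℂ) * chi (x ⬝ᵥ (u + v)) = if u + v ∈ S then 2 ^ m else 0 := by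
    simp only [cast_lam, sum_mul, ← chi_add, ← dotProduct_add]
    rw [sum_comm]
    simp only [sum_chi_dotProduct, add_eq_zero_iff_eq, sum_ite_eq']
  rw [hsum, adjMatrix]
  split_ifs <;> simp

lemma transferMatrix_apply (S : Finset (Fin m → ZMod 2)) (t : ℝ) (u v : Fin m → ZMod 2) :
    transferMatrix S t u v =
      (2 ^ m : ℂ)⁻¹ * ∑ x, Complex.exp (t * lam S x * Complex.I) * chi (x ⬝ᵥ (u + v)) := by
  have hgen : Complex.I • ((t : ℂ) • adjMatrix S) =
      hadamard m * diagonal (fun x => t * lam S x * Complex.I) * (hadamard m)⁻¹ := by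
    rw [adjMatrix_eq_hadamard_conj, ← Matrix.smul_mul, ← Matrix.smul_mul, ← Matrix.mul_smul,
      ← Matrix.mul_smul, ← diagonal_smul, ← diagonal_smul]
    congr 3
    ext x
    simp only [Pi.smul_apply, smul_eq_mul]
    ring
  rw [transferMatrix, hgen, exp_conj _ _ isUnit_hadamard, exp_diagonal,
    hadamard_conj_diagonal_apply]
  simp [Complex.exp_eq_exp_ℂ]

lemma stdBasis_eq_single {G : Type*} [DecidableEq G] (a : G) :
    _root_.stdBasis a = Pi.single a 1 := by
  ext v
  simp [_root_.stdBasis, Pi.single_apply]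

lemma edge_amplitude_eq (S : Finset (Fin m → ZMod 2)) (t : ℝ) {a b c d : Fin m → ZMod 2}
    (hsum : a + b + c + d = 0) :
    (1 / 2 : ℂ) * (_root_.stdBasis c - _root_.stdBasis d) ⬝ᵥ
        (transferMatrix S t *ᵥ (_root_.stdBasis a - _root_.stdBasis b)) =
      2 / 2 ^ m * ∑ x with (a + b) ⬝ᵥ x = 1,
        chi ((c + a) ⬝ᵥ x) * Complex.exp (t * lam S x * Complex.I) := by
  have hda : d + a = c + b := by
    linear_combination hsum - ZModModule.add_self b - ZModModule.add_self c
  have hdb : d + b = c + a := by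
    linear_combination hsum - ZModModule.add_self a - ZModModule.add_self c
  have hcb : c + b = (c + a) + (a + b) := by linear_combination -ZModModule.add_self a
  set e : (Fin m → ZMod 2) → ℂ := fun x => Complex.exp (t * lam S x * Complex.I)
  have hterm : ∀ x, e x * chi (x ⬝ᵥ (c + a)) - e x * chi (x ⬝ᵥ (c + b)) =
      2 * if (a + b) ⬝ᵥ x = 1 then chi ((c + a) ⬝ᵥ x) * e x else 0 := by
    intro x
    rw [hcb, dotProduct_add x (c + a), chi_add, dotProduct_comm x (c + a),
      dotProduct_comm x (a + b)]
    rcases zmod_two_eq_zero_or_eq_one ((a + b) ⬝ᵥ x) with h | h <;> simp [h]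
    ring
  simp only [stdBasis_eq_single, mulVec_sub, mulVec_single_one, sub_dotProduct, dotProduct_sub,
    single_dotProduct, col_apply, one_mul, transferMatrix_apply, hda, hdb]
  calc _ = (2 ^ m : ℂ)⁻¹ * ∑ x, (e x * chi (x ⬝ᵥ (c + a)) - e x * chi (x ⬝ᵥ (c + b))) := by
        rw [sum_sub_distrib]
        ring
    _ = _ := by
        simp only [hterm, ← mul_sum, sum_filter]
        ring

lemma norm_sum_eq_card_iff {ι V : Type*} [NormedAddCommGroup V] [NormedSpace ℝ V]
    [StrictConvexSpace ℝ V] {s : Finset ι} {z : ι → V} (hz : ∀ i ∈ s, ‖z i‖ = 1) {i₀ : ι}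
    (hi₀ : i₀ ∈ s) : ‖∑ i ∈ s, z i‖ = #s ↔ ∀ i ∈ s, z i = z i₀ := by
  constructor
  · intro h
    by_contra! ⟨i, hi, hne⟩
    have hs : (#s : ℝ) ≠ 0 := Nat.cast_ne_zero.2 (card_ne_zero_of_mem hi₀)
    have hlt := norm_sum_lt_of_strictConvexSpace (w := fun _ => (#s : ℝ)⁻¹)
      (fun _ _ => by positivity) (by simp [hs]) hi hi₀ hne (inv_ne_zero hs) (inv_ne_zero hs)
      (fun i hi => (hz i hi).le)
    rw [← smul_sum, norm_smul, h, norm_inv, Real.norm_natCast, inv_mul_cancel₀ hs] at hlt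
    exact hlt.false
  · intro h
    rw [sum_congr rfl h, sum_const, RCLike.norm_nsmul ℝ, hz i₀ hi₀, nsmul_one]

lemma hasPEST_iff_forall_exp_eq_chi {S : Finset (Fin m → ZMod 2)} {a b c d x₀ : Fin m → ZMod 2}
    (hab : a + b ≠ 0) (hsum : a + b + c + d = 0) (hx₀ : (a + b) ⬝ᵥ x₀ = 1)
    (hx₀' : (c + a) ⬝ᵥ x₀ = 0) (t : ℝ) :
    hasPEST S a b c d t ↔ ∀ x, (a + b) ⬝ᵥ x = 1 →
      Complex.exp (t * (lam S x₀ - lam S x : ℤ) * Complex.I) = chi ((c + a) ⬝ᵥ x) := by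
  set e : (Fin m → ZMod 2) → ℂ := fun x => Complex.exp (t * lam S x * Complex.I)
  have hscale : ‖(2 / 2 ^ m : ℂ)‖ = (#{x | (a + b) ⬝ᵥ x = 1} : ℝ)⁻¹ := by
    have hcard : (2 ^ m : ℂ) = 2 * #{x | (a + b) ⬝ᵥ x = 1} := by
      exact_mod_cast (two_mul_card_filter_dotProduct_eq_one hab).symm
    rw [hcard, div_mul_cancel_left₀ two_ne_zero, norm_inv, Complex.norm_natCast]
  have hnorm : ∀ x ∈ ({x | (a + b) ⬝ᵥ x = 1} : Finset _), ‖chi ((c + a) ⬝ᵥ x) * e x‖ = 1 :=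
    fun x _ => by simp [e, norm_chi, Complex.norm_exp]
  have hx₀T : x₀ ∈ ({x | (a + b) ⬝ᵥ x = 1} : Finset _) := by simpa using hx₀
  rw [hasPEST, edge_amplitude_eq S t hsum, pow_eq_one_iff_of_nonneg (norm_nonneg _) two_ne_zero,
    norm_mul, hscale, inv_mul_eq_one₀ (Nat.cast_ne_zero.2 (card_ne_zero_of_mem hx₀T)), eq_comm,
    norm_sum_eq_card_iff hnorm hx₀T]
  simp only [mem_filter, mem_univ, true_and, hx₀', chi_zero, one_mul]
  refine forall₂_congr fun x _ => ?_
  rw [Int.cast_sub, mul_sub, sub_mul, Complex.exp_sub, div_eq_iff (Complex.exp_ne_zero _), eq_comm]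

lemma hasPEST_iff_forall_int_parity {S : Finset (Fin m → ZMod 2)} {a b c d x₀ : Fin m → ZMod 2}
    (hab : a + b ≠ 0) (hsum : a + b + c + d = 0) (hx₀ : (a + b) ⬝ᵥ x₀ = 1)
    (hx₀' : (c + a) ⬝ᵥ x₀ = 0) (t : ℝ) :
    hasPEST S a b c d t ↔ ∀ x ∈ univ.filter fun x => (a + b) ⬝ᵥ x = 1 ∧ x ≠ x₀,
      ∃ n : ℤ, t / Real.pi * (lam S x₀ - lam S x : ℤ) = n ∧ (n : ZMod 2) = (c + a) ⬝ᵥ x := by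
  have hexp : ∀ x, Complex.exp (t * (lam S x₀ - lam S x : ℤ) * Complex.I) = chi ((c + a) ⬝ᵥ x) ↔
      ∃ n : ℤ, t / Real.pi * (lam S x₀ - lam S x : ℤ) = n ∧ (n : ZMod 2) = (c + a) ⬝ᵥ x := by
    intro x
    rw [← exp_mul_pi_mul_I_eq_chi_iff]
    congr! 2
    have : (Real.pi : ℂ) ≠ 0 := Complex.ofReal_ne_zero.2 Real.pi_ne_zero
    push_cast
    field_simp
  rw [hasPEST_iff_forall_exp_eq_chi hab hsum hx₀ hx₀']
  simp only [mem_filter, mem_univ, true_and, and_imp]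
  refine ⟨fun h x hx _ => (hexp x).1 (h x hx), fun h x hx => ?_⟩
  obtain rfl | hxx := eq_or_ne x x₀
  · simp [hx₀']
  · exact (hexp x).2 (h x hx hxx)

section Parity

variable {α : Type*} {s : Finset α} {f : α → ℤ} {ε : α → ZMod 2}

lemma exists_int_eq_mul_gcd {r : ℝ} (h : ∀ x ∈ s, ∃ n : ℤ, r * f x = n) :
    ∃ N : ℤ, r * s.gcd f = N := by
  obtain ⟨g, hg⟩ := s.gcd_eq_sum_mul f
  choose! n hn using h
  refine ⟨∑ x ∈ s, n x * g x, ?_⟩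
  rw [hg]
  push_cast
  rw [mul_sum]
  exact sum_congr rfl fun x hx => by rw [← mul_assoc, hn x hx]

lemma exists_odd_eq_mul_gcd {r : ℝ} (h : ∀ x ∈ s, ∃ n : ℤ, r * f x = n ∧ (n : ZMod 2) = ε x)
    {y : α} (hy : y ∈ s) (hεy : ε y = 1) : ∃ N : ℤ, Odd N ∧ r * s.gcd f = N := by
  obtain ⟨N, hN⟩ := exists_int_eq_mul_gcd fun x hx => (h x hx).imp fun _ => And.left
  obtain ⟨k, hk⟩ := gcd_dvd (f := f) hy
  obtain ⟨n, hn, hnε⟩ := h y hy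
  have hnk : n = N * k := by
    have : (n : ℝ) = N * k := by rw [← hn, ← hN, hk]; push_cast; ring
    exact_mod_cast this
  rw [hεy, hnk, ZMod.intCast_eq_one_iff_odd, Int.odd_mul] at hnε
  exact ⟨N, hnε.1, hN⟩

lemma forall_exists_int_parity_iff {r₀ : ℝ}
    (h₀ : ∀ x ∈ s, ∃ n : ℤ, r₀ * f x = n ∧ (n : ZMod 2) = ε x)
    {y : α} (hy : y ∈ s) (hεy : ε y = 1) (r : ℝ) :
    (∀ x ∈ s, ∃ n : ℤ, r * f x = n ∧ (n : ZMod 2) = ε x) ↔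
      ∃ N : ℤ, Odd N ∧ r * s.gcd f = N := by
  refine ⟨fun h => exists_odd_eq_mul_gcd h hy hεy, ?_⟩
  rintro ⟨N, hNodd, hN⟩ x hx
  -- `r₀ * gcd` is odd as well, so the quotient `k = f x / gcd` already has parity `ε x`.
  obtain ⟨N₀, hN₀odd, hN₀⟩ := exists_odd_eq_mul_gcd h₀ hy hεy
  obtain ⟨k, hk⟩ := gcd_dvd (f := f) hx
  obtain ⟨n₀, hn₀, hn₀ε⟩ := h₀ x hx
  have hn₀k : n₀ = N₀ * k := by
    have : (n₀ : ℝ) = N₀ * k := by rw [← hn₀, ← hN₀, hk]; push_cast; ring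
    exact_mod_cast this
  refine ⟨N * k, by rw [hk, Int.cast_mul, Int.cast_mul, ← hN]; ring, ?_⟩
  rw [← hn₀ε, hn₀k]
  push_cast
  rw [hNodd.intCast_zmod_two, hN₀odd.intCast_zmod_two]

end Parity

lemma exists_odd_iff_eq_odd_mul_pi_div {t : ℝ} (ht : 0 < t) {M : ℤ} (hM : 0 ≤ M) :
    (∃ N : ℤ, Odd N ∧ t / Real.pi * M = N) ↔ ∃ u : ℕ, t = (2 * u + 1) * Real.pi / M := by
  constructor
  · rintro ⟨_, ⟨k, rfl⟩, h⟩
    have hMpos : (0 : ℝ) < M := by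
      refine lt_of_le_of_ne (by exact_mod_cast hM) fun hM0 => ?_
      rw [← hM0, mul_zero] at h
      exact_mod_cast (by omega : (2 * k + 1 : ℤ) ≠ 0) (by exact_mod_cast h.symm)
    have hk : 0 ≤ k := by
      have : (0 : ℝ) < (2 * k + 1 : ℤ) := h ▸ by positivity
      have : (0 : ℤ) < 2 * k + 1 := by exact_mod_cast this
      omega
    refine ⟨k.toNat, ?_⟩
    have hku : ((k.toNat : ℕ) : ℝ) = k := by exact_mod_cast Int.toNat_of_nonneg hk
    rw [eq_div_iff hMpos.ne', hku]
    push_cast at h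
    field_simp at h
    linarith
  · rintro ⟨u, rfl⟩
    have hM0 : (M : ℝ) ≠ 0 := fun h => by simp [h] at ht
    exact ⟨2 * u + 1, odd_two_mul_add_one _, by push_cast; field_simp⟩

end Cubelike

open Cubelike

theorem hasPEST_time_iff_general {m : ℕ}
    (S : Finset (Fin m → ZMod 2)) (h0 : (0 : Fin m → ZMod 2) ∉ S)
    (a b c d : Fin m → ZMod 2) (hab : a + b ∈ S)
    (hca : c ≠ a) (hsum : a + b + c + d = 0)
    (hP : ∃ t₀ : ℝ, 0 < t₀ ∧ hasPEST S a b c d t₀)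
    (x₀ : Fin m → ZMod 2) (hx₀ : (c + a) ⬝ᵥ x₀ = 0 ∧ (b + a) ⬝ᵥ x₀ = 1)
    (M : ℤ)
    (hM : M = (univ.filter (fun x : Fin m → ZMod 2 => (a + b) ⬝ᵥ x = 1 ∧ x ≠ x₀)).gcd
      (fun x => lam S x₀ - lam S x)) :
    ∀ t : ℝ, 0 < t →
      (hasPEST S a b c d t ↔ ∃ u : ℕ, t = (2 * u + 1) * Real.pi / M) := by
  have hab₀ : a + b ≠ 0 := fun h => h0 (h ▸ hab)
  have hx₀b : (a + b) ⬝ᵥ x₀ = 1 := add_comm a b ▸ hx₀.2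
  have hpest := hasPEST_iff_forall_int_parity (S := S) hab₀ hsum hx₀b hx₀.1
  obtain ⟨y, hyb, hyc⟩ := exists_dotProduct_eq_one_of_dotProduct_eq_zero
    (fun h => hca (add_eq_zero_iff_eq.1 h)) hx₀b hx₀.1
  have hy : y ∈ univ.filter fun x => (a + b) ⬝ᵥ x = 1 ∧ x ≠ x₀ := by
    simp only [mem_filter, mem_univ, true_and]
    exact ⟨hyb, by rintro rfl; simp [hx₀.1] at hyc⟩
  obtain ⟨t₀, -, ht₀⟩ := hP
  intro t ht
  rw [hpest, forall_exists_int_parity_iff ((hpest t₀).1 ht₀) hy hyc, ← hM]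
  exact exists_odd_iff_eq_odd_mul_pi_div ht (hM ▸ Int.nonneg_of_normalize_eq_self (normalize_gcd ..))

/-- If a cubelike graph admits PEST from `(a,b)` to `(c,d)` at some positive time, then the
PEST times are exactly `(2u+1)π/M` where `M = gcd{λ_{x₀} - λ_x : (a+b)·x = 1, x ≠ x₀}`. -/
theorem hasPEST_time_iff {m : ℕ} (hm : 1 ≤ m)
    (S : Finset (Fin m → ZMod 2)) (h0 : (0 : Fin m → ZMod 2) ∉ S)
    (a b c d : Fin m → ZMod 2) (hab : a + b ∈ S) (hcd : c + d ∈ S)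
    (hbc : b ≠ c) (had : a ≠ d) (hca : c ≠ a) (hsum : a + b + c + d = 0)
    (hP : ∃ t₀ : ℝ, 0 < t₀ ∧ hasPEST S a b c d t₀)
    (x₀ : Fin m → ZMod 2) (hx₀ : (c + a) ⬝ᵥ x₀ = 0 ∧ (b + a) ⬝ᵥ x₀ = 1)
    (M : ℤ)
    (hM : M = (univ.filter (fun x : Fin m → ZMod 2 => (a + b) ⬝ᵥ x = 1 ∧ x ≠ x₀)).gcd
      (fun x => lam S x₀ - lam S x)) :
    ∀ t : ℝ, 0 < t →
      (hasPEST S a b c d t ↔ ∃ u : ℕ, t = (2 * u + 1) * Real.pi / M) :=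
  hasPEST_time_iff_general S h0 a b c d hab hca hsum hP x₀ hx₀ M hM
end
end
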